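/- Let v_1, ..., v_{2g+1} be nonzero vectors in (Z/2Z)^{2g} with (v_i, v_j) = 1 for all i ≠ j. Then v_1, ..., v_{2g} are linearly independent and v_{2g+1} = v_1 + v_2 + ... + v_{2g}. -/

import Mathlib

/-- The standard symplectic pairing on `(ℤ/2ℤ)^{2g}`: coordinates `2k` and `2k+1`
are paired for each `k < g`. -/
def sympPair (g : ℕ) (x y : Fin (2 * g) → ZMod 2) : ZMod 2 :=
  ∑ i : Fin g,
    (x ⟨2 * i.val, by have := i.isLt; omega⟩ * y ⟨2 * i.val + 1, by have := i.isLt; omega⟩ +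
     x ⟨2 * i.val + 1, by have := i.isLt; omega⟩ * y ⟨2 * i.val, by have := i.isLt; omega⟩)

/-!
Pairing a linear relation `∑ cᵢ vᵢ = 0` with `vⱼ` gives `∑_{i ≠ j} cᵢ = 0`, i.e. `cⱼ = ∑ cᵢ`:
all coefficients of a relation are equal. A relation with last coefficient `0` is therefore
trivial, so the first `2g` vectors are independent, hence a basis; expressing the last vector in
that basis yields a relation with last coefficient `-1`, so every coefficient is `-1`.
-/

open Finset

section EquipairedFamily

variable {R M ι : Type*} [CommRing R] [AddCommGroup M] [Module R M]
  (B : M →ₗ[R] M →ₗ[R] R)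

theorem coeff_eq_sum_of_sum_smul_eq_zero [Fintype ι] [DecidableEq ι] {v : ι → M}
    (hself : ∀ i, B (v i) (v i) = 0) (hpair : ∀ i j, i ≠ j → B (v i) (v j) = 1)
    {c : ι → R} (hc : ∑ i, c i • v i = 0) (j : ι) : c j = ∑ i, c i := by
  have hterm : ∀ i, c i * B (v i) (v j) = c i - if i = j then c i else 0 := by
    intro i
    by_cases h : i = j
    · subst h; simp [hself]
    · simp [hpair i j h, h]
  have hzero : B (∑ i, c i • v i) (v j) = 0 := by simp [hc]
  simp only [map_sum, map_smul, LinearMap.sum_apply, LinearMap.smul_apply,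
    smul_eq_mul, hterm, sum_sub_distrib, sum_ite_eq', mem_univ, if_true] at hzero
  exact (sub_eq_zero.mp hzero).symm

theorem coeff_eq_coeff_of_sum_smul_eq_zero [Fintype ι] [DecidableEq ι] {v : ι → M}
    (hself : ∀ i, B (v i) (v i) = 0) (hpair : ∀ i j, i ≠ j → B (v i) (v j) = 1)
    {c : ι → R} (hc : ∑ i, c i • v i = 0) (i j : ι) : c i = c j :=
  (coeff_eq_sum_of_sum_smul_eq_zero B hself hpair hc i).trans
    (coeff_eq_sum_of_sum_smul_eq_zero B hself hpair hc j).symm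

variable {n : ℕ} {v : Fin (n + 1) → M}

theorem linearIndependent_castSucc_of_pairing
    (hself : ∀ i, B (v i) (v i) = 0) (hpair : ∀ i j, i ≠ j → B (v i) (v j) = 1) :
    LinearIndependent R (fun i : Fin n => v i.castSucc) := by
  rw [Fintype.linearIndependent_iff]
  intro c hc i
  have hrel : ∑ k, (Fin.snoc c 0 : Fin (n + 1) → R) k • v k = 0 := by
    simpa [Fin.sum_univ_castSucc] using hc
  simpa using coeff_eq_coeff_of_sum_smul_eq_zero B hself hpair hrel i.castSucc (Fin.last n)

theorem last_eq_neg_sum_castSucc_of_pairing {K : Type*} [Field K] [Module K M]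
    [FiniteDimensional K M] (hdim : Module.finrank K M = n) (B : M →ₗ[K] M →ₗ[K] K)
    (hself : ∀ i, B (v i) (v i) = 0) (hpair : ∀ i j, i ≠ j → B (v i) (v j) = 1) :
    v (Fin.last n) = -∑ i : Fin n, v i.castSucc := by
  have hspan : Submodule.span K (Set.range fun i : Fin n => v i.castSucc) = ⊤ :=
    (linearIndependent_castSucc_of_pairing B hself hpair).span_eq_top_of_card_eq_finrank'
      (by simp [hdim])
  obtain ⟨c, hcv⟩ := (Submodule.mem_span_range_iff_exists_fun K).mp
    (hspan ▸ Submodule.mem_top : v (Fin.last n) ∈ _)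
  have hrel : ∑ k, (Fin.snoc c (-1) : Fin (n + 1) → K) k • v k = 0 := by
    simp [Fin.sum_univ_castSucc, hcv]
  have hc : ∀ i, c i = -1 := by
    intro i
    simpa using coeff_eq_coeff_of_sum_smul_eq_zero B hself hpair hrel i.castSucc (Fin.last n)
  simp [← hcv, hc]

end EquipairedFamily

theorem sympPair_self (g : ℕ) (x : Fin (2 * g) → ZMod 2) : sympPair g x x = 0 := by
  have hchar_two : ∀ a b : ZMod 2, a * b + b * a = 0 := by decide
  exact sum_eq_zero fun _ _ => hchar_two _ _

def sympForm (g : ℕ) : LinearMap.BilinForm (ZMod 2) (Fin (2 * g) → ZMod 2) :=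
  LinearMap.mk₂ (ZMod 2) (sympPair g)
    (fun _ _ _ => by simp only [sympPair, Pi.add_apply, ← sum_add_distrib]; congr 1; ext; ring)
    (fun _ _ _ => by simp only [sympPair, Pi.smul_apply, smul_eq_mul, mul_sum]; congr 1; ext; ring)
    (fun _ _ _ => by simp only [sympPair, Pi.add_apply, ← sum_add_distrib]; congr 1; ext; ring)
    (fun _ _ _ => by simp only [sympPair, Pi.smul_apply, smul_eq_mul, mul_sum]; congr 1; ext; ring)

theorem stmt3_general (g : ℕ) (v : Fin (2 * g + 1) → Fin (2 * g) → ZMod 2)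
    (hpair : ∀ i j, i ≠ j → sympPair g (v i) (v j) = 1) :
    LinearIndependent (ZMod 2) (fun i : Fin (2 * g) => v i.castSucc) ∧
      v (Fin.last (2 * g)) = ∑ i : Fin (2 * g), v i.castSucc := by
  have hself : ∀ i, sympForm g (v i) (v i) = 0 := fun i => sympPair_self g (v i)
  refine ⟨linearIndependent_castSucc_of_pairing (sympForm g) hself hpair, ?_⟩
  rw [last_eq_neg_sum_castSucc_of_pairing (Module.finrank_fin_fun _) (sympForm g) hself hpair,
    ZModModule.neg_eq_self]

theorem stmt3 (g : ℕ) (v : Fin (2 * g + 1) → Fin (2 * g) → ZMod 2)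
    (hnz : ∀ i, v i ≠ 0)
    (hpair : ∀ i j, i ≠ j → sympPair g (v i) (v j) = 1) :
    LinearIndependent (ZMod 2) (fun i : Fin (2 * g) => v i.castSucc) ∧
      v (Fin.last (2 * g)) = ∑ i : Fin (2 * g), v i.castSucc :=
  stmt3_general g v hpair
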